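/- For m > 1, γ_m(t) → +∞ as t → 0⁺; more precisely t · γ_m(t) → (m−1)/(2m) as t → 0⁺. -/

import Mathlib

open Real Filter

noncomputable def gammaCorr (m : ℕ) (t : ℝ) : ℝ :=
  ((((m : ℝ) ^ 2 + m) / 2 * Real.sinh t ^ 2 + t ^ 2) * Real.cosh t
      - ((m : ℝ) + 1) * t * Real.sinh t) / ((m : ℝ) ^ 2 * Real.sinh t ^ 3)
    + ((m : ℝ) - 1) / (2 * m)

theorem gammaCorr_blowup (m : ℕ) (hm : 1 < m) :
    Tendsto (gammaCorr m) (nhdsWithin 0 (Set.Ioi 0)) atTop ∧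
    Tendsto (fun t : ℝ => t * gammaCorr m t) (nhdsWithin 0 (Set.Ioi 0))
      (nhds (((m : ℝ) - 1) / (2 * m))) := by
  have hm2 : (2:ℝ) ≤ (m:ℝ) := by exact_mod_cast hm
  have hmpos : (0:ℝ) < m := by linarith
  have hmne : (m:ℝ) ≠ 0 := ne_of_gt hmpos
  set c : ℝ := ((m : ℝ) - 1) / (2 * m) with hc
  have hcpos : 0 < c := by
    apply div_pos <;> linarith
  -- sinh t / t → 1 as t → 0⁺
  have hslope : Tendsto (fun t : ℝ => Real.sinh t / t)
      (nhdsWithin 0 (Set.Ioi 0)) (nhds 1) := by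
    have h := hasDerivAt_iff_tendsto_slope.mp (Real.hasDerivAt_sinh 0)
    rw [Real.cosh_zero] at h
    have h2 := h.mono_left (nhdsWithin_mono _
      (fun x hx => ne_of_gt (Set.mem_Ioi.mp hx)))
    refine h2.congr fun t => ?_
    simp [slope_def_field, div_eq_div_iff]
  have hinv : Tendsto (fun t : ℝ => t / Real.sinh t)
      (nhdsWithin 0 (Set.Ioi 0)) (nhds 1) := by
    have := hslope.inv₀ one_ne_zero
    simpa [inv_div] using this
  have hcosh : Tendsto Real.cosh (nhdsWithin (0:ℝ) (Set.Ioi 0)) (nhds 1) := by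
    have := (Real.continuous_cosh.tendsto 0).mono_left
      (nhdsWithin_le_nhds (s := Set.Ioi (0:ℝ)))
    simpa using this
  set M : ℝ := ((m : ℝ) ^ 2 + m) / 2 with hM
  set g : ℝ → ℝ := fun t =>
    ((M * (Real.sinh t / t) ^ 2 + 1) * Real.cosh t
      - ((m : ℝ) + 1) * (Real.sinh t / t)) * (t / Real.sinh t) ^ 3 / (m : ℝ) ^ 2
    with hg
  have hgl : Tendsto g (nhdsWithin 0 (Set.Ioi 0))
      (nhds (((M * 1 ^ 2 + 1) * 1 - ((m : ℝ) + 1) * 1) * 1 ^ 3 / (m : ℝ) ^ 2)) := by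
    apply Tendsto.div_const
    exact (((((hslope.pow 2).const_mul M).add tendsto_const_nhds).mul hcosh).sub
      (hslope.const_mul _)).mul (hinv.pow 3)
  have hval : ((M * 1 ^ 2 + 1) * 1 - ((m : ℝ) + 1) * 1) * 1 ^ 3 / (m : ℝ) ^ 2 = c := by
    rw [hM, hc]
    field_simp
    ring
  rw [hval] at hgl
  -- t * γ(t) = g t + t * c eventually on Ioi 0
  have heq : ∀ t ∈ Set.Ioi (0:ℝ),
      t * gammaCorr m t = g t + t * c := by
    intro t ht
    have ht0 : (0:ℝ) < t := ht
    have hs : 0 < Real.sinh t := Real.sinh_pos_iff.mpr ht0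
    rw [gammaCorr, hg, hM, hc]
    field_simp
  have heq' : (fun t : ℝ => t * gammaCorr m t) =ᶠ[nhdsWithin 0 (Set.Ioi 0)]
      fun t => g t + t * c :=
    eventually_nhdsWithin_of_forall heq
  have htc : Tendsto (fun t : ℝ => t * c) (nhdsWithin 0 (Set.Ioi 0)) (nhds 0) := by
    have : Tendsto (fun t : ℝ => t) (nhdsWithin 0 (Set.Ioi 0)) (nhds 0) :=
      tendsto_id.mono_left nhdsWithin_le_nhds
    simpa using this.mul_const c
  have hmain : Tendsto (fun t : ℝ => t * gammaCorr m t)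
      (nhdsWithin 0 (Set.Ioi 0)) (nhds c) := by
    rw [Filter.tendsto_congr' heq']
    simpa using hgl.add htc
  refine ⟨?_, hmain⟩
  have hinvtop : Tendsto (fun t : ℝ => t⁻¹) (nhdsWithin 0 (Set.Ioi 0)) atTop :=
    tendsto_inv_nhdsGT_zero
  have := hmain.pos_mul_atTop hcpos hinvtop
  refine this.congr' ?_
  filter_upwards [self_mem_nhdsWithin] with t ht
  have ht0 : t ≠ 0 := ne_of_gt ht
  field_simp
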